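/- (Nonlocal maximum principle.) Let h>0, 0<s<1, let B^h ⊂ ℤ be a nonempty finite discrete interval, and let v:ℤ→ℝ be bounded. If (-Δ_h)^s v_j ≤ 0 for every j∈B^h, then max_{j∈B^h} v_j ≤ sup_{j∈ℤ∖B^h} v_j. Similarly, if (-Δ_h)^s v_j ≥ 0 for every j∈B^h, then min_{j∈B^h} v_j ≥ inf_{j∈ℤ∖B^h} v_j. -/

import Mathlib

/-- The kernel of the fractional discrete Laplacian on the mesh of size `h`. -/
noncomputable def Ksh (h s : ℝ) (m : ℤ) : ℝ :=
  if m = 0 then 0 else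
    ((4 : ℝ) ^ s * Real.Gamma (1/2 + s) / (Real.sqrt Real.pi * (Real.Gamma (1 - s) / s))) *
      (Real.Gamma (|(m : ℝ)| - s) / (h ^ (2 * s) * Real.Gamma (|(m : ℝ)| + 1 + s)))

/-- The fractional discrete Laplacian `(-Δ_h)^s v_j = Σ_{m ≠ j} (v_j - v_m) K_s^h(j-m)`. -/
noncomputable def fracLap (h s : ℝ) (v : ℤ → ℝ) (j : ℤ) : ℝ :=
  ∑' m : ℤ, (v j - v m) * Ksh h s (j - m)

/-!
If `v` exceeded its values outside the finite set `B` at some point of `B`, its maximum over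
`B` would be a global maximum `v j₀`. Every term `(v j₀ - v m) K(j₀ - m)` of the nonlocal
Laplacian at `j₀` is then nonnegative, and the terms with `m ∉ B` are positive because the kernel
is positive off the origin, so `(-Δ_h)^s v_{j₀} > 0`. This needs the series to be summable
(otherwise `tsum` is `0`), which follows from the boundedness of `v` and the summability of the
kernel; the latter follows by telescoping, since
`Γ(n-s)/Γ(n+1+s) = (Γ(n-s)/Γ(n+s) - Γ(n+1-s)/Γ(n+1+s)) / (2s)`.
The minimum principle is the maximum principle for `-v`.
-/

open Real

lemma summable_of_eq_sub_succ {f g : ℕ → ℝ} (hf : ∀ n, 0 ≤ f n) (hg : ∀ n, 0 ≤ g n)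
    (hfg : ∀ n, f n = g n - g (n + 1)) : Summable f :=
  summable_of_sum_range_le hf (c := g 0) fun n => by
    rw [Finset.sum_congr rfl fun i _ => hfg i, Finset.sum_range_sub']
    linarith [hg n]

noncomputable def gammaRatio (s x : ℝ) : ℝ := Gamma (x - s) / Gamma (x + s)

lemma gammaRatio_nonneg {s x : ℝ} (hs : 0 ≤ s) (hsx : s < x) : 0 ≤ gammaRatio s x :=
  div_nonneg (Gamma_pos_of_pos (by linarith)).le (Gamma_pos_of_pos (by linarith)).le

lemma gammaRatio_sub_gammaRatio_add_one {s x : ℝ} (hs : 0 ≤ s) (hsx : s < x) :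
    gammaRatio s x - gammaRatio s (x + 1) = 2 * s * (Gamma (x - s) / Gamma (x + 1 + s)) := by
  have hxs : 0 < x + s := by linarith
  have hGamma_sub : Gamma (x + 1 - s) = (x - s) * Gamma (x - s) := by
    rw [add_sub_right_comm, Gamma_add_one (by linarith)]
  have hGamma_add : Gamma (x + 1 + s) = (x + s) * Gamma (x + s) := by
    rw [add_right_comm, Gamma_add_one hxs.ne']
  have hG : Gamma (x + s) ≠ 0 := (Gamma_pos_of_pos hxs).ne'
  rw [gammaRatio, gammaRatio, hGamma_sub, hGamma_add]
  field_simp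
  ring

noncomputable def KshConst (h s : ℝ) : ℝ :=
  4 ^ s * Gamma (1/2 + s) / (√π * (Gamma (1 - s) / s)) / h ^ (2 * s)

lemma KshConst_pos {h s : ℝ} (hh : 0 < h) (hs0 : 0 < s) (hs1 : s < 1) : 0 < KshConst h s := by
  have := Gamma_pos_of_pos (show 0 < 1/2 + s by linarith)
  have := Gamma_pos_of_pos (show 0 < 1 - s by linarith)
  have := rpow_pos_of_pos hh (2 * s)
  unfold KshConst
  positivity

lemma Ksh_of_ne_zero (h s : ℝ) {m : ℤ} (hm : m ≠ 0) :
    Ksh h s m = KshConst h s * (Gamma (|(m : ℝ)| - s) / Gamma (|(m : ℝ)| + 1 + s)) := by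
  rw [Ksh, if_neg hm, KshConst]
  ring

lemma Ksh_pos {h s : ℝ} (hh : 0 < h) (hs0 : 0 < s) (hs1 : s < 1) {m : ℤ} (hm : m ≠ 0) :
    0 < Ksh h s m := by
  have hm_abs : (1 : ℝ) ≤ |(m : ℝ)| := by
    rw [← Int.cast_abs]
    exact_mod_cast Int.one_le_abs hm
  rw [Ksh_of_ne_zero h s hm]
  exact mul_pos (KshConst_pos hh hs0 hs1)
    (div_pos (Gamma_pos_of_pos (by linarith)) (Gamma_pos_of_pos (by linarith)))

lemma Ksh_nonneg {h s : ℝ} (hh : 0 < h) (hs0 : 0 < s) (hs1 : s < 1) : 0 ≤ Ksh h s := by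
  intro m
  rcases eq_or_ne m 0 with rfl | hm
  · simp [Ksh]
  · exact (Ksh_pos hh hs0 hs1 hm).le

lemma Ksh_neg (h s : ℝ) (m : ℤ) : Ksh h s (-m) = Ksh h s m := by
  simp only [Ksh, neg_eq_zero, Int.cast_neg, abs_neg]

lemma Ksh_natCast_add_one (h s : ℝ) (hs0 : 0 < s) (hs1 : s < 1) (n : ℕ) :
    Ksh h s (n + 1 : ℕ) = KshConst h s / (2 * s) * gammaRatio s (n + 1) -
      KshConst h s / (2 * s) * gammaRatio s (n + 2) := by
  have hn : (1 : ℝ) ≤ n + 1 := by linarith [n.cast_nonneg (α := ℝ)]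
  rw [Ksh_of_ne_zero h s (by omega), ← mul_sub, show (n : ℝ) + 2 = n + 1 + 1 by ring,
    gammaRatio_sub_gammaRatio_add_one hs0.le (by linarith)]
  push_cast
  rw [abs_of_nonneg (by positivity)]
  field_simp

lemma summable_Ksh {h s : ℝ} (hh : 0 < h) (hs0 : 0 < s) (hs1 : s < 1) : Summable (Ksh h s) := by
  have hnat : Summable fun n : ℕ => Ksh h s n := by
    refine (summable_nat_add_iff 1).1 (summable_of_eq_sub_succ
      (g := fun n => KshConst h s / (2 * s) * gammaRatio s (n + 1))
      (fun n => Ksh_nonneg hh hs0 hs1 _) (fun n => ?_) (fun n => ?_))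
    · exact mul_nonneg (div_pos (KshConst_pos hh hs0 hs1) (by positivity)).le
        (gammaRatio_nonneg hs0.le (by linarith [n.cast_nonneg (α := ℝ)]))
    · rw [Ksh_natCast_add_one h s hs0 hs1 n]
      push_cast
      ring_nf
  exact hnat.of_nat_of_neg (by simpa only [Ksh_neg] using hnat)

section NonlocalLaplacian

variable {K v : ℤ → ℝ}

noncomputable def nonlocalLap (K v : ℤ → ℝ) (j : ℤ) : ℝ := ∑' m : ℤ, (v j - v m) * K (j - m)

lemma nonlocalLap_neg (K v : ℤ → ℝ) (j : ℤ) : nonlocalLap K (-v) j = -nonlocalLap K v j := by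
  simp only [nonlocalLap, Pi.neg_apply, ← tsum_neg, ← neg_mul, neg_sub_neg, neg_sub]

lemma summable_sub_mul_kernel (hK : Summable K) {M : ℝ} (hv : ∀ j, |v j| ≤ M) (j : ℤ) :
    Summable fun m => (v j - v m) * K (j - m) := by
  refine .of_norm_bounded ((hK.abs.comp_injective (sub_right_injective (b := j))).mul_left (2 * M))
    fun m => ?_
  rw [Real.norm_eq_abs, abs_mul]
  refine mul_le_mul_of_nonneg_right ?_ (abs_nonneg _)
  linarith [abs_sub (v j) (v m), hv j, hv m]

lemma eq_of_forall_le_of_nonlocalLap_nonpos (hK0 : 0 ≤ K) (hK : ∀ m ≠ 0, 0 < K m) {j : ℤ}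
    (hsum : Summable fun m => (v j - v m) * K (j - m)) (hmax : ∀ m, v m ≤ v j)
    (hlap : nonlocalLap K v j ≤ 0) (m : ℤ) : v m = v j := by
  by_contra hne
  have hpos : 0 < nonlocalLap K v j :=
    hsum.tsum_pos (fun m => mul_nonneg (sub_nonneg.2 (hmax m)) (hK0 _)) m
      (mul_pos (sub_pos.2 ((hmax m).lt_of_ne hne)) (hK _ (sub_ne_zero.2 fun h => hne (h ▸ rfl))))
  linarith

theorem exists_notMem_le_of_nonlocalLap_nonpos (hK0 : 0 ≤ K) (hK : ∀ m ≠ 0, 0 < K m)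
    (hKsum : Summable K) {M : ℝ} (hv : ∀ j, |v j| ≤ M) {B : Set ℤ} (hB : B.Finite)
    (hlap : ∀ j ∈ B, nonlocalLap K v j ≤ 0) {j : ℤ} (hj : j ∈ B) : ∃ m ∉ B, v j ≤ v m := by
  obtain ⟨j₀, hj₀, hj₀_max⟩ := B.exists_max_image v hB ⟨j, hj⟩
  obtain ⟨m₀, hm₀⟩ := hB.infinite_compl.nonempty
  by_contra! hout
  have hglobal : ∀ m, v m ≤ v j₀ := fun m => by
    by_cases hm : m ∈ B
    · exact hj₀_max m hm
    · exact ((hout m hm).trans_le (hj₀_max j hj)).le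
  have := eq_of_forall_le_of_nonlocalLap_nonpos hK0 hK (summable_sub_mul_kernel hKsum hv j₀)
    hglobal (hlap j₀ hj₀) m₀
  linarith [hout m₀ hm₀, hj₀_max j hj]

theorem exists_notMem_le_of_nonlocalLap_nonneg (hK0 : 0 ≤ K) (hK : ∀ m ≠ 0, 0 < K m)
    (hKsum : Summable K) {M : ℝ} (hv : ∀ j, |v j| ≤ M) {B : Set ℤ} (hB : B.Finite)
    (hlap : ∀ j ∈ B, 0 ≤ nonlocalLap K v j) {j : ℤ} (hj : j ∈ B) : ∃ m ∉ B, v m ≤ v j := by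
  have hlap_neg : ∀ j ∈ B, nonlocalLap K (-v) j ≤ 0 := fun j hj => by
    rw [nonlocalLap_neg]
    linarith [hlap j hj]
  obtain ⟨m, hm, hle⟩ := exists_notMem_le_of_nonlocalLap_nonpos hK0 hK hKsum (M := M)
    (by simpa only [Pi.neg_apply, abs_neg] using hv) hB hlap_neg hj
  exact ⟨m, hm, neg_le_neg_iff.1 hle⟩

end NonlocalLaplacian

lemma fracLap_eq_nonlocalLap (h s : ℝ) : fracLap h s = nonlocalLap (Ksh h s) := rfl

theorem nonlocal_maximum_principle_general (h s : ℝ) (hh : 0 < h) (hs0 : 0 < s) (hs1 : s < 1)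
    (a b : ℤ) (v : ℤ → ℝ) (M : ℝ) (hv : ∀ j : ℤ, |v j| ≤ M) :
    ((∀ j ∈ Set.Icc a b, fracLap h s v j ≤ 0) →
      ∀ j ∈ Set.Icc a b, v j ≤ ⨆ m : {m : ℤ // m ∉ Set.Icc a b}, v m) ∧
    ((∀ j ∈ Set.Icc a b, 0 ≤ fracLap h s v j) →
      ∀ j ∈ Set.Icc a b, (⨅ m : {m : ℤ // m ∉ Set.Icc a b}, v m) ≤ v j) := by
  simp only [fracLap_eq_nonlocalLap]
  have hK0 := Ksh_nonneg hh hs0 hs1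
  have hK := fun m => Ksh_pos (m := m) hh hs0 hs1
  have hKsum := summable_Ksh hh hs0 hs1
  have hbdd : BddAbove (Set.range fun m : {m : ℤ // m ∉ Set.Icc a b} => v m) :=
    ⟨M, by rintro _ ⟨m, rfl⟩; exact (abs_le.1 (hv m)).2⟩
  have hbdd' : BddBelow (Set.range fun m : {m : ℤ // m ∉ Set.Icc a b} => v m) :=
    ⟨-M, by rintro _ ⟨m, rfl⟩; exact (abs_le.1 (hv m)).1⟩
  refine ⟨fun hlap j hj => ?_, fun hlap j hj => ?_⟩
  · obtain ⟨m, hm, hle⟩ :=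
      exists_notMem_le_of_nonlocalLap_nonpos hK0 hK hKsum hv (Set.finite_Icc a b) hlap hj
    exact hle.trans (le_ciSup hbdd ⟨m, hm⟩)
  · obtain ⟨m, hm, hle⟩ :=
      exists_notMem_le_of_nonlocalLap_nonneg hK0 hK hKsum hv (Set.finite_Icc a b) hlap hj
    exact (ciInf_le hbdd' ⟨m, hm⟩).trans hle

/-- Nonlocal maximum principle on a finite discrete interval `B^h = Set.Icc a b`:
subsolutions are dominated by their supremum outside `B^h`, and supersolutions
dominate their infimum outside `B^h`. -/
theorem nonlocal_maximum_principle (h s : ℝ) (hh : 0 < h) (hs0 : 0 < s) (hs1 : s < 1)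
    (a b : ℤ) (hab : a ≤ b) (v : ℤ → ℝ) (M : ℝ) (hv : ∀ j : ℤ, |v j| ≤ M) :
    ((∀ j ∈ Set.Icc a b, fracLap h s v j ≤ 0) →
      ∀ j ∈ Set.Icc a b, v j ≤ ⨆ m : {m : ℤ // m ∉ Set.Icc a b}, v m) ∧
    ((∀ j ∈ Set.Icc a b, 0 ≤ fracLap h s v j) →
      ∀ j ∈ Set.Icc a b, (⨅ m : {m : ℤ // m ∉ Set.Icc a b}, v m) ≤ v j) :=
  nonlocal_maximum_principle_general h s hh hs0 hs1 a b v M hv
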